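/- Let k ≥ 1, let G be a k-edge-connected finite simple graph on V, fix a root r ∈ V, and let u be a snug vertex. If (S₁, S₂) and (T₁, T₂) are both snug shores for u, then S₁ = T₁ and S₂ = T₂; that is, every snug vertex has unique snug shores. -/

import Mathlib

open Finset

variable {V : Type*} [Fintype V] [DecidableEq V]

/-- `Crosses S e`: exactly one endpoint of the edge/link `e` lies in `S`. -/
def Crosses (S : Finset V) (e : Sym2 V) : Prop :=
  ∃ x y : V, e = s(x, y) ∧ x ∈ S ∧ y ∉ S

instance (S : Finset V) : DecidablePred (Crosses S) := fun e =>
  decidable_of_iff (∃ x y : V, e = s(x, y) ∧ x ∈ S ∧ y ∉ S) Iff.rfl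

/-- The cut `δ(S)`: edges of `G` with exactly one endpoint in `S`. -/
def cutEdges (G : SimpleGraph V) [DecidableRel G.Adj] (S : Finset V) :
    Finset (Sym2 V) :=
  G.edgeFinset.filter fun e => Crosses S e

/-- `G` is `k`-edge-connected: every nonempty proper cut has at least `k` crossing edges. -/
def EdgeConnected (G : SimpleGraph V) [DecidableRel G.Adj] (k : ℕ) : Prop :=
  ∀ S : Finset V, S.Nonempty → S ≠ Finset.univ → k ≤ (cutEdges G S).card

/-- `S` is a `k`-cut: a nonempty proper vertex set with exactly `k` crossing edges. -/
def IsCut (G : SimpleGraph V) [DecidableRel G.Adj] (k : ℕ) (S : Finset V) : Prop :=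
  S.Nonempty ∧ S ≠ Finset.univ ∧ (cutEdges G S).card = k

/-- `(S₁, S₂)` are snug shores for `v` (with respect to the root `r`):
two `k`-cuts avoiding `r` with `v ∉ S₁` and `S₂ = S₁ ∪ {v}`. -/
def SnugShores (G : SimpleGraph V) [DecidableRel G.Adj] (k : ℕ) (r v : V)
    (S₁ S₂ : Finset V) : Prop :=
  IsCut G k S₁ ∧ IsCut G k S₂ ∧ r ∉ S₁ ∧ r ∉ S₂ ∧ v ∉ S₁ ∧ S₂ = insert v S₁

/-- `v` is a snug vertex (with respect to the root `r`). -/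
def Snug (G : SimpleGraph V) [DecidableRel G.Adj] (k : ℕ) (r v : V) : Prop :=
  v ≠ r ∧ k + 1 ≤ G.degree v ∧ ∃ S₁ S₂ : Finset V, SnugShores G k r v S₁ S₂

/-- A snug chain: snug vertices `u 0, …, u t` together with `k`-cuts
`S 0, …, S (t+1)` such that `(S i, S (i+1))` are snug shores for `u i`. -/
def IsSnugChain (G : SimpleGraph V) [DecidableRel G.Adj] (k : ℕ) (r : V)
    (t : ℕ) (u : ℕ → V) (S : ℕ → Finset V) : Prop :=
  ∀ i ≤ t, Snug G k r (u i) ∧ SnugShores G k r (u i) (S i) (S (i + 1))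

/-!
Write `d(X)` for the number of edges crossing `X`; it is submodular and posimodular. Suppose
`S₁ ⊄ T₁`. Then `A = S₁ \ T₂` is nonempty and misses `r`, so `d(A) ≥ k` and posimodularity for
`S₁, T₂` gives `d(T₂ \ S₁) ≤ k`; submodularity for `S₂, T₂`, with `d(S₂ ∪ T₂) ≥ k`, gives
`d(S₂ ∩ T₂) ≤ k`. The two sets `S₂ ∩ T₂` and `T₂ \ S₁` meet in `{u}` and cover `T₂`, so
submodularity once more yields `2k ≥ d(u) + d(T₂) ≥ 2k + 1`.
-/

section Cuts

omit [Fintype V] in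
theorem crosses_mk_iff {S : Finset V} {x y : V} : Crosses S s(x, y) ↔ (x ∈ S ↔ y ∉ S) := by
  constructor
  · rintro ⟨a, b, h, ha, hb⟩
    rcases Sym2.eq_iff.mp h with ⟨rfl, rfl⟩ | ⟨rfl, rfl⟩ <;> tauto
  · intro h
    by_cases hx : x ∈ S
    · exact ⟨x, y, rfl, hx, h.mp hx⟩
    · exact ⟨y, x, Sym2.eq_swap, by tauto, hx⟩

variable (G : SimpleGraph V) [DecidableRel G.Adj]

theorem cutEdges_compl (S : Finset V) : cutEdges G Sᶜ = cutEdges G S := by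
  ext e
  induction e using Sym2.ind
  simp only [cutEdges, mem_filter, crosses_mk_iff, mem_compl]
  tauto

theorem cutEdges_singleton (v : V) : cutEdges G {v} = G.incidenceFinset v := by
  ext e
  induction e using Sym2.ind with
  | _ x y =>
    simp only [cutEdges, SimpleGraph.incidenceFinset_eq_filter, mem_filter, crosses_mk_iff,
      mem_singleton, Sym2.mem_iff, SimpleGraph.mem_edgeFinset, SimpleGraph.mem_edgeSet,
      and_congr_right_iff]
    intro hxy
    have := G.ne_of_adj hxy
    grind

theorem card_cutEdges_singleton (v : V) : #(cutEdges G {v}) = G.degree v := by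
  rw [cutEdges_singleton, G.card_incidenceFinset_eq_degree]

theorem card_cutEdges_inter_add_card_cutEdges_union_le (X Y : Finset V) :
    #(cutEdges G (X ∩ Y)) + #(cutEdges G (X ∪ Y)) ≤ #(cutEdges G X) + #(cutEdges G Y) := by
  rw [← card_union_add_card_inter _ (cutEdges G (X ∪ Y)),
    ← card_union_add_card_inter (cutEdges G X)]
  refine add_le_add (card_le_card fun e => ?_) (card_le_card fun e => ?_) <;>
  · induction e using Sym2.ind
    simp only [cutEdges, mem_union, mem_inter, mem_filter, crosses_mk_iff]
    tauto

theorem card_cutEdges_sdiff_add_card_cutEdges_sdiff_le (X Y : Finset V) :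
    #(cutEdges G (X \ Y)) + #(cutEdges G (Y \ X)) ≤ #(cutEdges G X) + #(cutEdges G Y) := by
  have h := card_cutEdges_inter_add_card_cutEdges_union_le G X Yᶜ
  rwa [← sdiff_eq_inter_compl, show X ∪ Yᶜ = (Y \ X)ᶜ by ext; simp; tauto, cutEdges_compl,
    cutEdges_compl] at h

variable {G}

theorem EdgeConnected.le_card_cutEdges {k : ℕ} (hG : EdgeConnected G k) {r : V} {S : Finset V}
    (hS : S.Nonempty) (hr : r ∉ S) : k ≤ #(cutEdges G S) :=
  hG S hS fun h => hr (h ▸ mem_univ r)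

theorem SnugShores.subset {k : ℕ} (hG : EdgeConnected G k) {r u : V} (hdeg : k + 1 ≤ G.degree u)
    {S₁ S₂ T₁ T₂ : Finset V} (hS : SnugShores G k r u S₁ S₂) (hT : SnugShores G k r u T₁ T₂) :
    S₁ ⊆ T₁ := by
  obtain ⟨⟨-, -, hS₁⟩, ⟨-, -, hS₂⟩, hrS₁, hrS₂, huS₁, rfl⟩ := hS
  obtain ⟨-, ⟨-, -, hT₂⟩, -, hrT₂, huT₁, rfl⟩ := hT
  intro x hx
  by_contra hxT₁
  have hA : k ≤ #(cutEdges G (S₁ \ insert u T₁)) :=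
    hG.le_card_cutEdges ⟨x, by grind⟩ (by grind : r ∉ S₁ \ insert u T₁)
  have hU : k ≤ #(cutEdges G (insert u S₁ ∪ insert u T₁)) :=
    hG.le_card_cutEdges ⟨u, by simp⟩ (by grind : r ∉ insert u S₁ ∪ insert u T₁)
  have hS₁T₂ := card_cutEdges_sdiff_add_card_cutEdges_sdiff_le G S₁ (insert u T₁)
  have hS₂T₂ := card_cutEdges_inter_add_card_cutEdges_union_le G (insert u S₁) (insert u T₁)
  have hsplit := card_cutEdges_inter_add_card_cutEdges_union_le G
    (insert u S₁ ∩ insert u T₁) (insert u T₁ \ S₁)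
  rw [show insert u S₁ ∩ insert u T₁ ∩ (insert u T₁ \ S₁) = {u} by grind,
    show insert u S₁ ∩ insert u T₁ ∪ insert u T₁ \ S₁ = insert u T₁ by grind,
    card_cutEdges_singleton] at hsplit
  omega

end Cuts

theorem snugShores_unique_general
    (k : ℕ) (G : SimpleGraph V) [DecidableRel G.Adj]
    (hG : EdgeConnected G k) (r u : V) (hu : Snug G k r u)
    (S₁ S₂ T₁ T₂ : Finset V)
    (h₁ : SnugShores G k r u S₁ S₂) (h₂ : SnugShores G k r u T₁ T₂) :
    S₁ = T₁ ∧ S₂ = T₂ := by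
  obtain ⟨-, hdeg, -⟩ := hu
  have h : S₁ = T₁ := (h₁.subset hG hdeg h₂).antisymm (h₂.subset hG hdeg h₁)
  obtain ⟨-, -, -, -, -, rfl⟩ := h₁
  obtain ⟨-, -, -, -, -, rfl⟩ := h₂
  exact ⟨h, h ▸ rfl⟩

/-- Every snug vertex has unique snug shores. -/
theorem snugShores_unique
    (k : ℕ) (hk : 1 ≤ k) (G : SimpleGraph V) [DecidableRel G.Adj]
    (hG : EdgeConnected G k) (r u : V) (hu : Snug G k r u)
    (S₁ S₂ T₁ T₂ : Finset V)
    (h₁ : SnugShores G k r u S₁ S₂) (h₂ : SnugShores G k r u T₁ T₂) :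
    S₁ = T₁ ∧ S₂ = T₂ :=
  snugShores_unique_general k G hG r u hu S₁ S₂ T₁ T₂ h₁ h₂
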